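/- Let P be a lazy, irreducible, aperiodic Markov chain on a finite state space K with stationary distribution π, and let A ⊆ K be nonempty. Then ψ̄⁺(A) = (1/2)·∫_{1/2}^1 ((π(A) − π(A_u))/π(A))² du. -/

import Mathlib

open Finset MeasureTheory

noncomputable section

attribute [local instance] Classical.propDecidable

variable {K : Type*} [Fintype K]

/-- `matPow P t u v` is the `t`-step transition probability from `u` to `v`. -/
def matPow (P : K → K → ℝ) : ℕ → K → K → ℝ
  | 0 => fun u v => if u = v then 1 else 0
  | (t + 1) => fun u v => ∑ w, matPow P t u w * P w v

/-- `P` is a stochastic matrix with (strictly positive) stationary distribution `π`. -/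
structure IsMarkov (P : K → K → ℝ) (π : K → ℝ) : Prop where
  nonneg : ∀ u v, 0 ≤ P u v
  rowSum : ∀ u, ∑ v, P u v = 1
  piPos : ∀ v, 0 < π v
  piSum : ∑ v, π v = 1
  stationary : ∀ v, ∑ u, π u * P u v = π v

/-- `P` is lazy: every holding probability is at least `1/2`. -/
def IsLazy (P : K → K → ℝ) : Prop := ∀ u, (1 : ℝ) / 2 ≤ P u u

/-- irreducibility: every state can reach every other state. -/
def MCIrreducible (P : K → K → ℝ) : Prop := ∀ u v : K, ∃ t : ℕ, 0 < matPow P t u v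

/-- aperiodicity: the gcd of the return times of every state is `1`. -/
def MCAperiodic (P : K → K → ℝ) : Prop :=
  ∀ u : K, ∀ d : ℕ, (∀ t : ℕ, 0 < matPow P t u u → d ∣ t) → d ≤ 1

/-- reversibility: the detailed balance condition. -/
def IsReversible (P : K → K → ℝ) (π : K → ℝ) : Prop :=
  ∀ u v, π u * P u v = π v * P v u

/-- `π`-measure of a set. -/
def meas (π : K → ℝ) (A : Finset K) : ℝ := ∑ v ∈ A, π v

/-- the time reversal `P̄(u,v) = π(v) P(v,u) / π(u)`. -/
def rev (P : K → K → ℝ) (π : K → ℝ) (u v : K) : ℝ := π v * P v u / π u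

/-- transition probability from a point into a set, w.r.t. kernel `R`. -/
def setProb (R : K → K → ℝ) (v : K) (C : Finset K) : ℝ := ∑ c ∈ C, R v c

/-- the level set `A_u = {y : R(y,A) > u}`, w.r.t. kernel `R`. -/
def levelSet (R : K → K → ℝ) (A : Finset K) (u : ℝ) : Finset K :=
  Finset.univ.filter (fun y => u < setProb R y A)

/-- `g` is a fractional subset of `S` of measure `t`. -/
def IsFracSub (π : K → ℝ) (S : Finset K) (g : K → ℝ) (t : ℝ) : Prop :=
  (∀ v, 0 ≤ g v ∧ g v ≤ 1) ∧ (∀ v ∉ S, g v = 0) ∧ ∑ v, g v * π v = t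

/-- ergodic flow from a fractional subset `g` into `C`, w.r.t. kernel `R`. -/
def fracFlow (R : K → K → ℝ) (π : K → ℝ) (g : K → ℝ) (C : Finset K) : ℝ :=
  ∑ v, g v * π v * setProb R v C

/-- `Ψ(t, Aᶜ)` w.r.t. kernel `R`: for `t ≤ π(A)` the minimal flow into `Aᶜ` from a
fractional subset of `A` of measure `t`; for `t > π(A)` the minimal flow into `A`
from a fractional subset of `Aᶜ` of measure `1 − t`. -/
def Psi (R : K → K → ℝ) (π : K → ℝ) (A : Finset K) (t : ℝ) : ℝ :=
  if t ≤ meas π A then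
    sInf {q : ℝ | ∃ g : K → ℝ, IsFracSub π A g t ∧ q = fracFlow R π g Aᶜ}
  else
    sInf {q : ℝ | ∃ g : K → ℝ, IsFracSub π Aᶜ g (1 - t) ∧ q = fracFlow R π g A}

/-- `Ψ_big(t, Aᶜ)` w.r.t. kernel `R`: maximal flow into `Aᶜ` from a fractional
subset of `A` of measure `t`. -/
def PsiSup (R : K → K → ℝ) (π : K → ℝ) (A : Finset K) (t : ℝ) : ℝ :=
  sSup {q : ℝ | ∃ g : K → ℝ, IsFracSub π A g t ∧ q = fracFlow R π g Aᶜ}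

/-- the spread `ψ⁺(A)` (w.r.t. kernel `R`). -/
def psiPlus (R : K → K → ℝ) (π : K → ℝ) (A : Finset K) : ℝ :=
  (∫ t in (0:ℝ)..(meas π A), Psi R π A t) / (meas π A) ^ 2

/-- the quantity `ψ⁻(A)` (w.r.t. kernel `R`). -/
def psiMinus (R : K → K → ℝ) (π : K → ℝ) (A : Finset K) : ℝ :=
  (∫ t in (meas π A)..(1:ℝ), Psi R π A t) / (meas π A) ^ 2

/-- the modified spread `ψ_mod(A)` (w.r.t. kernel `R`). -/
def psiMod (R : K → K → ℝ) (π : K → ℝ) (A : Finset K) : ℝ :=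
  (∫ t in (0:ℝ)..(1:ℝ), Psi R π A t / min t (1 - t)) / meas π A

/-- the global spread `ψ_gl(A)` (w.r.t. kernel `R`). -/
def psiGl (R : K → K → ℝ) (π : K → ℝ) (A : Finset K) : ℝ :=
  (∫ t in (0:ℝ)..(1:ℝ), Psi R π A t) / (meas π A) ^ 2

/-- the quantity `ψ_big(A)` (w.r.t. kernel `R`). -/
def psiBig (R : K → K → ℝ) (π : K → ℝ) (A : Finset K) : ℝ :=
  (∫ t in (0:ℝ)..(meas π A), PsiSup R π A t) / (meas π A) ^ 2

/-- the evolving-set quantity `ψ_evo(A)`, with level sets taken w.r.t. kernel `R`. -/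
def psiEvo (R : K → K → ℝ) (π : K → ℝ) (A : Finset K) : ℝ :=
  1 - ∫ u in (0:ℝ)..(1:ℝ), Real.sqrt (meas π (levelSet R A u) / meas π A)

/-- ergodic flow `Q(B,C)`. -/
def ergFlow (P : K → K → ℝ) (π : K → ℝ) (B C : Finset K) : ℝ :=
  ∑ u ∈ B, ∑ v ∈ C, π u * P u v

/-- conductance `Φ(A)`. -/
def conductance (P : K → K → ℝ) (π : K → ℝ) (A : Finset K) : ℝ :=
  ergFlow P π A Aᶜ / meas π A

def Qone (P : K → K → ℝ) (π : K → ℝ) (C D : Finset K) : ℝ :=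
  ∑ v ∈ C, setProb P v D * π v

def Qtwo (P : K → K → ℝ) (π : K → ℝ) (C D : Finset K) : ℝ :=
  ∑ v ∈ C, Real.sqrt (setProb P v D) * π v

def Qinfty (P : K → K → ℝ) (π : K → ℝ) (C D : Finset K) : ℝ :=
  meas π (C.filter (fun v => 0 < setProb P v D))

/-- discrete gradient `h₁⁺(A)`. -/
def hOneP (P : K → K → ℝ) (π : K → ℝ) (A : Finset K) : ℝ :=
  Qone P π A Aᶜ / min (meas π A) (meas π Aᶜ)

/-- discrete gradient `h₁⁻(A)`. -/
def hOneM (P : K → K → ℝ) (π : K → ℝ) (A : Finset K) : ℝ :=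
  Qone P π Aᶜ A / min (meas π A) (meas π Aᶜ)

/-- discrete gradient `h₂⁺(A)`. -/
def hTwoP (P : K → K → ℝ) (π : K → ℝ) (A : Finset K) : ℝ :=
  Qtwo P π A Aᶜ / min (meas π A) (meas π Aᶜ)

/-- discrete gradient `h₂⁻(A)`. -/
def hTwoM (P : K → K → ℝ) (π : K → ℝ) (A : Finset K) : ℝ :=
  Qtwo P π Aᶜ A / min (meas π A) (meas π Aᶜ)

/-- discrete gradient `h_∞⁺(A)`. -/
def hInfP (P : K → K → ℝ) (π : K → ℝ) (A : Finset K) : ℝ :=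
  Qinfty P π A Aᶜ / min (meas π A) (meas π Aᶜ)

/-- discrete gradient `h_∞⁻(A)`. -/
def hInfM (P : K → K → ℝ) (π : K → ℝ) (A : Finset K) : ℝ :=
  Qinfty P π Aᶜ A / min (meas π A) (meas π Aᶜ)

/-- `p` is a probability distribution. -/
def IsDist (p : K → ℝ) : Prop := (∀ v, 0 ≤ p v) ∧ ∑ v, p v = 1

/-- the distribution after `t` steps starting from `p`. -/
def stepDist (P : K → K → ℝ) (p : K → ℝ) (t : ℕ) (v : K) : ℝ :=
  ∑ u, p u * matPow P t u v

/-- total variation distance. -/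
def tvDist (μ π : K → ℝ) : ℝ := (1 / 2) * ∑ v, |μ v - π v|

/-- chi-square distance. -/
def chi2Dist (μ π : K → ℝ) : ℝ := ∑ v, (μ v / π v - 1) ^ 2 * π v

/-- total variation mixing time `τ(ε)`: the max over initial distributions of the
least time at which total variation distance drops to `ε`. -/
def mixTV (P : K → K → ℝ) (π : K → ℝ) (ε : ℝ) : ℕ :=
  sSup {n : ℕ | ∃ p : K → ℝ, IsDist p ∧
    n = sInf {t : ℕ | tvDist (stepDist P p t) π ≤ ε}}

/-- chi-square mixing time `χ²(ε)`. -/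
def mixChi2 (P : K → K → ℝ) (π : K → ℝ) (ε : ℝ) : ℕ :=
  sSup {n : ℕ | ∃ p : K → ℝ, IsDist p ∧
    n = sInf {t : ℕ | chi2Dist (stepDist P p t) π ≤ ε}}

/-- `π₀ = min_v π(v)`. -/
def piMin (π : K → ℝ) : ℝ := sInf {r : ℝ | ∃ v : K, r = π v}

/-- `ψ⁺(x)`: worst spread over sets of measure at most `x`. -/
def psiPlusSize (R : K → K → ℝ) (π : K → ℝ) (x : ℝ) : ℝ :=
  sInf {r : ℝ | ∃ A : Finset K, 0 < meas π A ∧ meas π A ≤ x ∧ r = psiPlus R π A}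

/-- `ψ_evo(x)`: worst evolving-set quantity over sets of measure at most `x`. -/
def psiEvoSize (R : K → K → ℝ) (π : K → ℝ) (x : ℝ) : ℝ :=
  sInf {r : ℝ | ∃ A : Finset K, 0 < meas π A ∧ meas π A ≤ x ∧ r = psiEvo R π A}

/-- `ψ_big(x)`: worst `ψ_big` over sets of measure at most `x`. -/
def psiBigSize (R : K → K → ℝ) (π : K → ℝ) (x : ℝ) : ℝ :=
  sInf {r : ℝ | ∃ A : Finset K, 0 < meas π A ∧ meas π A ≤ x ∧ r = psiBig R π A}

/-- Dirichlet form. -/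
def dirichletForm (P : K → K → ℝ) (π : K → ℝ) (f : K → ℝ) : ℝ :=
  (1 / 2) * ∑ u, ∑ v, π u * P u v * (f u - f v) ^ 2

/-- variance w.r.t. `π`. -/
def varPi (π : K → ℝ) (f : K → ℝ) : ℝ :=
  ∑ v, π v * f v ^ 2 - (∑ v, π v * f v) ^ 2

/-- the spectral gap `λ`. -/
def specGap (P : K → K → ℝ) (π : K → ℝ) : ℝ :=
  sInf {r : ℝ | ∃ f : K → ℝ, (∃ u v, f u ≠ f v) ∧ r = dirichletForm P π f / varPi π f}

/-- `P_* = 1 − min_{u ∈ A} P(u, A)`. -/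
def Pstar (P : K → K → ℝ) (A : Finset K) : ℝ :=
  1 - sInf {r : ℝ | ∃ u ∈ A, r = setProb P u A}

/-- `P_min = min {P(u,v)/π(v) : u ∈ A, v ∈ Aᶜ, P(u,v) > 0}`. -/
def PminEdge (P : K → K → ℝ) (π : K → ℝ) (A : Finset K) : ℝ :=
  sInf {r : ℝ | ∃ u ∈ A, ∃ v ∈ Aᶜ, 0 < P u v ∧ r = P u v / π v}

/-- `w(t) = inf {y ∈ [0,1] : π(A_y) ≤ t}`. -/
def wfun (R : K → K → ℝ) (π : K → ℝ) (A : Finset K) (t : ℝ) : ℝ :=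
  sInf {y : ℝ | y ∈ Set.Icc (0:ℝ) 1 ∧ meas π (levelSet R A y) ≤ t}

/-! For a lazy kernel, `P̄(v, A) ≥ 1/2` on `A` and `P̄(v, A) ≤ 1/2` off `A`, so the level sets
`A_u` with `u ≥ 1/2` lie inside `A`. Writing `1 - P̄(v, A) = ∫_{1/2}^1 [P̄(v, A) ≤ u] du`, the flow
out of a fractional subset `g` of `A` of measure `t` is `∫_{1/2}^1 (t - g(A_u)) du`, and
`g(A_u) ≤ min t π(A_u)`, with equality for the greedy `g` that fills `A` in decreasing order of
`P̄(·, A)`. Hence `Ψ̄(t, Aᶜ) = ∫_{1/2}^1 (t - π(A_u))⁺ du`, and integrating over `t ∈ [0, π(A)]`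
(Fubini) gives `∫_{1/2}^1 (π(A) - π(A_u))² / 2 du`. -/

lemma ite_lt_eq_indicator (r c : ℝ) :
    (fun u : ℝ => if u < r then c else 0) = (Set.Iio r).indicator fun _ => c := rfl

lemma intervalIntegrable_ite_lt (a b r c : ℝ) :
    IntervalIntegrable (fun u : ℝ => if u < r then c else 0) volume a b := by
  rw [ite_lt_eq_indicator]
  exact ⟨intervalIntegrable_const.1.indicator measurableSet_Iio,
    intervalIntegrable_const.2.indicator measurableSet_Iio⟩

lemma integral_ite_lt {a b r : ℝ} (c : ℝ) (har : a ≤ r) (hrb : r ≤ b) :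
    ∫ u in a..b, (if u < r then c else 0) = c * (r - a) := by
  have hinter : Set.Iio r ∩ Set.Ioc a b = Set.Ioo a r := by
    ext u
    simp only [Set.mem_inter_iff, Set.mem_Iio, Set.mem_Ioc, Set.mem_Ioo]
    exact ⟨fun ⟨hur, hau, _⟩ => ⟨hau, hur⟩, fun ⟨hau, hur⟩ => ⟨hur, hau, by linarith⟩⟩
  rw [ite_lt_eq_indicator, intervalIntegral.integral_of_le (har.trans hrb),
    integral_indicator_const _ measurableSet_Iio, measureReal_restrict_apply measurableSet_Iio,
    hinter, Real.volume_real_Ioo_of_le har, smul_eq_mul, mul_comm]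

lemma integral_max_sub_zero {c M : ℝ} (hc : 0 ≤ c) (hcM : c ≤ M) :
    ∫ t in (0 : ℝ)..M, max (t - c) 0 = (M - c) ^ 2 / 2 := by
  have hmono : Monotone fun t : ℝ => max (t - c) 0 := fun a b hab =>
    max_le_max (by linarith) le_rfl
  rw [← intervalIntegral.integral_add_adjacent_intervals (b := c)
    hmono.intervalIntegrable hmono.intervalIntegrable]
  have hleft : ∫ t in (0 : ℝ)..c, max (t - c) 0 = 0 := by
    rw [intervalIntegral.integral_congr (g := fun _ => (0 : ℝ)), intervalIntegral.integral_zero]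
    intro t ht
    rw [Set.uIcc_of_le hc] at ht
    exact max_eq_right (by linarith [ht.2])
  have hright : ∫ t in c..M, max (t - c) 0 = (M - c) ^ 2 / 2 := by
    rw [intervalIntegral.integral_congr (g := fun t => t - c),
      intervalIntegral.integral_comp_sub_right (fun x => x), sub_self, integral_id]
    · ring
    · intro t ht
      rw [Set.uIcc_of_le hcM] at ht
      exact max_eq_left (by linarith [ht.1])
  rw [hleft, hright, zero_add]

lemma integral_integral_max_sub_zero {p : ℝ → ℝ} (hp : Measurable p) {a b M : ℝ} (hab : a ≤ b)
    (hp0 : ∀ u ∈ Set.Icc a b, 0 ≤ p u) (hpM : ∀ u ∈ Set.Icc a b, p u ≤ M) :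
    ∫ t in (0 : ℝ)..M, ∫ u in a..b, max (t - p u) 0 = ∫ u in a..b, (M - p u) ^ 2 / 2 := by
  have hM : 0 ≤ M := (hp0 a ⟨le_rfl, hab⟩).trans (hpM a ⟨le_rfl, hab⟩)
  rw [intervalIntegral_intervalIntegral_swap]
  · refine intervalIntegral.integral_congr fun u hu => ?_
    rw [Set.uIcc_of_le hab] at hu
    exact integral_max_sub_zero (hp0 u hu) (hpM u hu)
  · have hmeas : Measurable (Function.uncurry fun t u => max (t - p u) 0) :=
      (measurable_fst.sub (hp.comp measurable_snd)).max measurable_const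
    refine IntegrableOn.of_bound ?_ hmeas.aestronglyMeasurable M ?_
    · exact lt_of_le_of_lt
        (measure_mono (Set.prod_mono Set.uIoc_subset_uIcc Set.uIoc_subset_uIcc))
        (isCompact_uIcc.prod isCompact_uIcc).measure_lt_top
    · refine ae_restrict_of_forall_mem (measurableSet_uIoc.prod measurableSet_uIoc) ?_
      rintro ⟨t, u⟩ ⟨ht, hu⟩
      rw [Set.uIoc_of_le hM] at ht
      rw [Set.uIoc_of_le hab] at hu
      have := hp0 u (Set.Ioc_subset_Icc_self hu)
      rw [Function.uncurry_apply_pair, Real.norm_of_nonneg (le_max_right _ _)]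
      exact max_le (by linarith [ht.2]) hM

omit [Fintype K] in
lemma meas_nonneg {π : K → ℝ} (hπ : ∀ v, 0 ≤ π v) (s : Finset K) : 0 ≤ meas π s :=
  Finset.sum_nonneg fun v _ => hπ v

omit [Fintype K] in
lemma meas_insert {π : K → ℝ} {a : K} {s : Finset K} (ha : a ∉ s) :
    meas π (insert a s) = π a + meas π s :=
  Finset.sum_insert ha

omit [Fintype K] in
lemma meas_mono {π : K → ℝ} (hπ : ∀ v, 0 ≤ π v) {B C : Finset K} (h : B ⊆ C) :
    meas π B ≤ meas π C :=
  Finset.sum_le_sum_of_subset_of_nonneg h fun v _ _ => hπ v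

lemma IsFracSub.sum_eq {π : K → ℝ} {S : Finset K} {g : K → ℝ} {t : ℝ}
    (hg : IsFracSub π S g t) : ∑ v ∈ S, g v * π v = t := by
  rw [← hg.2.2]
  exact Finset.sum_subset (Finset.subset_univ S) fun v _ hv => by rw [hg.2.1 v hv, zero_mul]

lemma IsFracSub.sum_le_min {π : K → ℝ} {S : Finset K} {g : K → ℝ} {t : ℝ}
    (hg : IsFracSub π S g t) (hπ : ∀ v, 0 ≤ π v) (B : Finset K) :
    ∑ v ∈ B, g v * π v ≤ min t (meas π B) := by
  refine le_min ?_ (Finset.sum_le_sum fun v _ => mul_le_of_le_one_left (hπ v) (hg.1 v).2)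
  rw [← hg.2.2]
  exact Finset.sum_le_sum_of_subset_of_nonneg (Finset.subset_univ B) fun v _ _ =>
    mul_nonneg (hg.1 v).1 (hπ v)

theorem exists_isFracSub_sum_filter_eq_min {π : K → ℝ} (hπ : ∀ v, 0 < π v) (r : K → ℝ)
    (s : Finset K) {t : ℝ} (ht : 0 ≤ t) (hts : t ≤ meas π s) :
    ∃ g, IsFracSub π s g t ∧
      ∀ u, ∑ v ∈ s with u < r v, g v * π v = min t (meas π {v ∈ s | u < r v}) := by
  induction s using Finset.induction_on_max_value r generalizing t with
  | empty =>
    have ht0 : t = 0 := le_antisymm (by simpa [meas] using hts) ht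
    refine ⟨0, ⟨fun _ => by simp, fun _ _ => rfl, by simp [ht0]⟩, fun u => by simp [ht0, meas]⟩
  | insert a s has hmax ih =>
    -- `a` has the largest score: give it as much mass as possible and recurse on the rest
    have hπa := hπ a
    have hs0 := meas_nonneg (fun v => (hπ v).le) s
    obtain ⟨g, hg, hglevel⟩ :=
      ih (t := t - min (π a) t) (by simp) (by rw [meas_insert has] at hts; grind)
    have hx0 : 0 ≤ min 1 (t / π a) := le_min zero_le_one (by positivity)
    have hxa : min 1 (t / π a) * π a = min (π a) t := by
      rw [min_mul_of_nonneg _ _ hπa.le, one_mul, div_mul_cancel₀ _ hπa.ne']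
    have hsum_s : ∀ s' ⊆ s, ∑ v ∈ s', Function.update g a (min 1 (t / π a)) v * π v
        = ∑ v ∈ s', g v * π v := fun s' hs' =>
      Finset.sum_congr rfl fun v hv => by
        rw [Function.update_of_ne (by rintro rfl; exact has (hs' hv))]
    refine ⟨Function.update g a (min 1 (t / π a)), ⟨fun v => ?_, fun v hv => ?_, ?_⟩, fun u => ?_⟩
    · rcases eq_or_ne v a with rfl | hva
      · simpa using hx0
      · simpa [hva] using hg.1 v
    · rw [Finset.mem_insert, not_or] at hv
      simpa [hv.1] using hg.2.1 v hv.2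
    · rw [← Finset.sum_subset (Finset.subset_univ (insert a s)), Finset.sum_insert has,
        hsum_s s subset_rfl, Function.update_self, hxa]
      · linarith [hg.sum_eq]
      · intro v _ hv
        rw [Finset.mem_insert, not_or] at hv
        simp [hv.1, hg.2.1 v hv.2]
    · by_cases hu : u < r a
      · have hm := meas_nonneg (fun v => (hπ v).le) {v ∈ s | u < r v}
        rw [Finset.filter_insert, if_pos hu, Finset.sum_insert (by simp [has]),
          Function.update_self, hxa, hsum_s _ (Finset.filter_subset _ _), hglevel u,
          meas_insert (by simp [has])]
        grind
      · have hempty : {v ∈ s | u < r v} = ∅ :=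
          Finset.filter_eq_empty_iff.2 fun v hv => by linarith [hmax v hv]
        simp [Finset.filter_insert, hu, hempty, meas, ht]

section LazyKernel

variable {R : K → K → ℝ} {π : K → ℝ}

omit [Fintype K] in
lemma setProb_nonneg (hR : ∀ u v, 0 ≤ R u v) (v : K) (C : Finset K) : 0 ≤ setProb R v C :=
  Finset.sum_nonneg fun c _ => hR v c

omit [Fintype K] in
lemma setProb_mono (hR : ∀ u v, 0 ≤ R u v) (v : K) {C D : Finset K} (h : C ⊆ D) :
    setProb R v C ≤ setProb R v D :=
  Finset.sum_le_sum_of_subset_of_nonneg h fun c _ _ => hR v c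

lemma setProb_compl (hR1 : ∀ u, ∑ v, R u v = 1) (v : K) (C : Finset K) :
    setProb R v Cᶜ = 1 - setProb R v C := by
  rw [← hR1 v, ← Finset.sum_compl_add_sum C, setProb, setProb, add_sub_cancel_right]

lemma setProb_le_one (hR : ∀ u v, 0 ≤ R u v) (hR1 : ∀ u, ∑ v, R u v = 1) (v : K)
    (C : Finset K) : setProb R v C ≤ 1 := by
  linarith [setProb_compl hR1 v C, setProb_nonneg hR v Cᶜ]

omit [Fintype K] in
lemma half_le_setProb_of_mem (hR : ∀ u v, 0 ≤ R u v) (hlazy : IsLazy R) {v : K}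
    {C : Finset K} (hv : v ∈ C) : 1 / 2 ≤ setProb R v C :=
  (hlazy v).trans (Finset.single_le_sum (fun c _ => hR v c) hv)

lemma levelSet_subset (hR : ∀ u v, 0 ≤ R u v) (hR1 : ∀ u, ∑ v, R u v = 1)
    (hlazy : IsLazy R) (A : Finset K) {u : ℝ} (hu : 1 / 2 ≤ u) : levelSet R A u ⊆ A := by
  intro y hy
  by_contra hyA
  have hAy : A ⊆ {y}ᶜ := fun a ha => by simpa using ne_of_mem_of_not_mem ha hyA
  have hyy : setProb R y {y} = R y y := Finset.sum_singleton _ _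
  have := setProb_mono hR y hAy
  rw [setProb_compl hR1, hyy] at this
  linarith [hlazy y, (Finset.mem_filter.1 hy).2]

lemma levelSet_antitone (A : Finset K) : Antitone (levelSet R A) := fun _ _ huu' y hy => by
  simp only [levelSet, Finset.mem_filter] at hy ⊢
  exact ⟨hy.1, huu'.trans_lt hy.2⟩

lemma antitone_sum_levelSet {w : K → ℝ} (hw : ∀ v, 0 ≤ w v) (A : Finset K) :
    Antitone fun u => ∑ v ∈ levelSet R A u, w v := fun _ _ huu' =>
  Finset.sum_le_sum_of_subset_of_nonneg (levelSet_antitone A huu') fun v _ _ => hw v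

lemma levelSet_eq_filter (hR : ∀ u v, 0 ≤ R u v) (hR1 : ∀ u, ∑ v, R u v = 1)
    (hlazy : IsLazy R) (A : Finset K) {u : ℝ} (hu : 1 / 2 ≤ u) :
    levelSet R A u = {v ∈ A | u < setProb R v A} := by
  ext v
  simp only [levelSet, Finset.mem_filter, Finset.mem_univ, true_and]
  exact ⟨fun h => ⟨levelSet_subset hR hR1 hlazy A hu (by simpa [levelSet] using h), h⟩,
    And.right⟩

lemma meas_levelSet_antitone (hπ : ∀ v, 0 ≤ π v) (A : Finset K) :
    Antitone fun u => meas π (levelSet R A u) :=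
  antitone_sum_levelSet hπ A

theorem fracFlow_compl_eq_integral (hR : ∀ u v, 0 ≤ R u v) (hR1 : ∀ u, ∑ v, R u v = 1)
    (hlazy : IsLazy R) (hπ : ∀ v, 0 ≤ π v) {A : Finset K} {g : K → ℝ} {t : ℝ}
    (hg : IsFracSub π A g t) :
    fracFlow R π g Aᶜ = ∫ u in (1 / 2 : ℝ)..1, (t - ∑ v ∈ levelSet R A u, g v * π v) := by
  have hterm : ∀ v, ∫ u in (1 / 2 : ℝ)..1, (if u < setProb R v A then g v * π v else 0)
      = g v * π v * (setProb R v A - 1 / 2) := by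
    intro v
    by_cases hv : v ∈ A
    · exact integral_ite_lt _ (half_le_setProb_of_mem hR hlazy hv) (setProb_le_one hR hR1 v A)
    · simp [hg.2.1 v hv]
  have hlevel : ∫ u in (1 / 2 : ℝ)..1, ∑ v ∈ levelSet R A u, g v * π v
      = ∑ v, g v * π v * (setProb R v A - 1 / 2) := by
    simp only [levelSet, Finset.sum_filter]
    rw [intervalIntegral.integral_finsetSum fun v _ => intervalIntegrable_ite_lt _ _ _ _]
    exact Finset.sum_congr rfl fun v _ => hterm v
  have hgπ : ∀ v, 0 ≤ g v * π v := fun v => mul_nonneg (hg.1 v).1 (hπ v)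
  rw [intervalIntegral.integral_sub intervalIntegrable_const
    (antitone_sum_levelSet hgπ A).intervalIntegrable, hlevel, intervalIntegral.integral_const,
    fracFlow]
  simp only [setProb_compl hR1, mul_sub, Finset.sum_sub_distrib, ← Finset.sum_mul, hg.2.2]
  norm_num
  ring

theorem Psi_eq_integral (hR : ∀ u v, 0 ≤ R u v) (hR1 : ∀ u, ∑ v, R u v = 1)
    (hlazy : IsLazy R) (hπ : ∀ v, 0 < π v) (A : Finset K) {t : ℝ} (ht : 0 ≤ t)
    (htA : t ≤ meas π A) :
    Psi R π A t = ∫ u in (1 / 2 : ℝ)..1, max (t - meas π (levelSet R A u)) 0 := by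
  rw [Psi, if_pos htA]
  refine IsLeast.csInf_eq ⟨?_, ?_⟩
  · obtain ⟨g, hg, hlevel⟩ :=
      exists_isFracSub_sum_filter_eq_min hπ (fun v => setProb R v A) A ht htA
    refine ⟨g, hg, ?_⟩
    rw [fracFlow_compl_eq_integral hR hR1 hlazy (fun v => (hπ v).le) hg]
    refine intervalIntegral.integral_congr fun u hu => ?_
    rw [Set.uIcc_of_le (by norm_num)] at hu
    simp only [levelSet_eq_filter hR hR1 hlazy A hu.1, hlevel u]
    grind
  · rintro q ⟨g, hg, rfl⟩
    rw [fracFlow_compl_eq_integral hR hR1 hlazy (fun v => (hπ v).le) hg]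
    have hmeas := meas_levelSet_antitone (R := R) (fun v => (hπ v).le) A
    have hgπ : ∀ v, 0 ≤ g v * π v := fun v => mul_nonneg (hg.1 v).1 (hπ v).le
    refine intervalIntegral.integral_mono_on (by norm_num)
      (Monotone.intervalIntegrable fun a b hab => max_le_max (by linarith [hmeas hab]) le_rfl)
      (intervalIntegrable_const.sub (antitone_sum_levelSet hgπ A).intervalIntegrable)
      fun u _ => ?_
    have := hg.sum_le_min (fun v => (hπ v).le) (levelSet R A u)
    exact max_le (by linarith [min_le_right t (meas π (levelSet R A u))])
      (by linarith [min_le_left t (meas π (levelSet R A u))])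

end LazyKernel

section TimeReversal

variable {P : K → K → ℝ} {π : K → ℝ}

lemma rev_nonneg (hM : IsMarkov P π) (u v : K) : 0 ≤ rev P π u v :=
  div_nonneg (mul_nonneg (hM.piPos v).le (hM.nonneg v u)) (hM.piPos u).le

lemma sum_rev_eq_one (hM : IsMarkov P π) (u : K) : ∑ v, rev P π u v = 1 := by
  simp only [rev, ← Finset.sum_div, hM.stationary u, div_self (hM.piPos u).ne']

lemma IsLazy.rev (hM : IsMarkov P π) (hlazy : IsLazy P) : IsLazy (rev P π) := fun u => by
  rw [_root_.rev, mul_div_cancel_left₀ _ (hM.piPos u).ne']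
  exact hlazy u

end TimeReversal

theorem spread_eq_levelSet_integral_general
    (P : K → K → ℝ) (π : K → ℝ) (A : Finset K)
    (hM : IsMarkov P π) (hlazy : IsLazy P) :
    psiPlus (rev P π) π A =
      (1 / 2) * ∫ u in (1/2 : ℝ)..(1:ℝ),
        ((meas π A - meas π (levelSet (rev P π) A u)) / meas π A) ^ 2 := by
  have hR := rev_nonneg hM
  have hR1 := sum_rev_eq_one hM
  have hlazyR := hlazy.rev hM
  have hπ : ∀ v, 0 ≤ π v := fun v => (hM.piPos v).le
  have hΨ : ∫ t in (0 : ℝ)..meas π A, Psi (rev P π) π A t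
      = ∫ t in (0 : ℝ)..meas π A, ∫ u in (1 / 2 : ℝ)..1,
          max (t - meas π (levelSet (rev P π) A u)) 0 := by
    refine intervalIntegral.integral_congr fun t ht => ?_
    rw [Set.uIcc_of_le (meas_nonneg hπ A)] at ht
    exact Psi_eq_integral hR hR1 hlazyR hM.piPos A ht.1 ht.2
  rw [psiPlus, hΨ, integral_integral_max_sub_zero
    (meas_levelSet_antitone hπ A).measurable (by norm_num) (fun u _ => meas_nonneg hπ _)
    (fun u hu => meas_mono hπ (levelSet_subset hR hR1 hlazyR A hu.1))]
  simp only [div_pow, intervalIntegral.integral_div]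
  ring

/-- `ψ̄⁺(A) = (1/2)·∫_{1/2}^1 ((π(A) − π(A_u))/π(A))² du`. -/
theorem spread_eq_levelSet_integral
    (P : K → K → ℝ) (π : K → ℝ) (A : Finset K)
    (hM : IsMarkov P π) (hlazy : IsLazy P)
    (hirr : MCIrreducible P) (hap : MCAperiodic P)
    (hA : A.Nonempty) :
    psiPlus (rev P π) π A =
      (1 / 2) * ∫ u in (1/2 : ℝ)..(1:ℝ),
        ((meas π A - meas π (levelSet (rev P π) A u)) / meas π A) ^ 2 :=
  spread_eq_levelSet_integral_general P π A hM hlazy
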